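/- arXiv:1604.07587 — 3 statements merged into one kernel-verified Lean document; each statement's English description precedes it below -/
import Mathlib

section
/- Let $\{x_n^*\}$ be a sequence in $\ell_1$ converging coordinatewise to $x_0^* \in \ell_1$ and such that $\lim_{n\to\infty}\|x_n^* - x_0^*\|$ exists. Then $\lim_{m\to\infty}\lim_{n\to\infty}\|x_n^* - x_m^*\| = 2\lim_{n\to\infty}\|x_n^* - x_0^*\|$. -/
open Filter Topology ENNReal NormedSpace

noncomputable section

instance : Fact ((1:ℝ≥0∞) ≤ 1) := ⟨le_rfl⟩

/-- The space `ℓ₁` of absolutely summable real sequences. -/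
abbrev ell1 : Type := lp (fun _ : ℕ => ℝ) 1

/-- The standard unit vector basis of `ℓ₁`. -/
def basisv (i : ℕ) : ell1 := lp.single 1 i (1:ℝ)

/-- The weak-star topology `σ(ℓ₁, X)` on `ℓ₁` induced by a predual `X` via an
isometric identification `e` of the dual of `X` with `ℓ₁`. -/
def wstar (X : Type*) [NormedAddCommGroup X] [NormedSpace ℝ X]
    (e : StrongDual ℝ X ≃ₗᵢ[ℝ] ell1) : TopologicalSpace ell1 :=
  TopologicalSpace.induced (fun y => StrongDual.toWeakDual (e.symm y)) inferInstance

/-- The weak-star topology `σ(Y*, Y)` on the dual of a normed space `Y`. -/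
def wsDual (Y : Type*) [NormedAddCommGroup Y] [NormedSpace ℝ Y] :
    TopologicalSpace (StrongDual ℝ Y) :=
  TopologicalSpace.induced (fun φ : StrongDual ℝ Y => StrongDual.toWeakDual φ)
    inferInstance

/-! In `ℓ¹`, a sequence `yₙ` tending to `0` coordinatewise carries its mass off to infinity, so
`‖yₙ + z‖ - ‖yₙ‖ → ‖z‖` for every fixed `z`: the coordinatewise defect `‖a‖ + ‖b‖ - ‖a + b‖` lies
in `[0, 2‖b‖]` and tends to `0`, so dominated convergence for series applies. With
`yₙ = xₙ - x₀` and `z = x₀ - xₘ` this gives `‖xₙ - xₘ‖ → L + ‖xₘ - x₀‖`, which tends to `2L`. -/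

theorem abs_norm_add_norm_sub_norm_add_le {G : Type*} [SeminormedAddCommGroup G] (a b : G) :
    |‖a‖ + ‖b‖ - ‖a + b‖| ≤ 2 * ‖b‖ := by
  have h₁ := norm_add_le a b
  have h₂ : ‖a‖ - ‖b‖ ≤ ‖a + b‖ := by simpa using norm_sub_norm_le a (-b)
  rw [abs_le]
  constructor <;> linarith [norm_nonneg b]

namespace lp

variable {ι : Type*} {E : ι → Type*} [∀ i, NormedAddCommGroup (E i)]

theorem norm_eq_tsum_norm (f : lp E 1) : ‖f‖ = ∑' i, ‖f i‖ := by
  simpa using norm_eq_tsum_rpow (p := 1) (by norm_num) f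

theorem summable_norm (f : lp E 1) : Summable fun i => ‖f i‖ := by
  simpa using (lp.memℓp f).summable (p := 1) (by norm_num)

theorem tendsto_norm_add_sub_norm_of_tendsto_coe_zero {α : Type*} {l : Filter α}
    {y : α → lp E 1} (hy : ∀ i, Tendsto (fun n => y n i) l (𝓝 0)) (z : lp E 1) :
    Tendsto (fun n => ‖y n + z‖ - ‖y n‖) l (𝓝 ‖z‖) := by
  set defect : α → ι → ℝ := fun n i => ‖y n i‖ + ‖z i‖ - ‖y n i + z i‖
  have h_defect : ∀ n, ‖y n‖ + ‖z‖ - ‖y n + z‖ = ∑' i, defect n i := by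
    intro n
    have h_sum : Summable fun i => ‖y n i + z i‖ := by
      simpa using summable_norm (y n + z)
    simp only [defect, norm_eq_tsum_norm, coeFn_add, Pi.add_apply]
    rw [← Summable.tsum_add (summable_norm _) (summable_norm _),
      ← Summable.tsum_sub ((summable_norm _).add (summable_norm _)) h_sum]
  have h_lim : Tendsto (fun n => ∑' i, defect n i) l (𝓝 0) := by
    rw [← tsum_zero]
    exact tendsto_tsum_of_dominated_convergence ((summable_norm z).mul_left 2)
      (fun i => by simpa using ((hy i).norm.add_const ‖z i‖).sub ((hy i).add_const (z i)).norm)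
      (.of_forall fun n i => abs_norm_add_norm_sub_norm_add_le (y n i) (z i))
  have h := (tendsto_const_nhds (x := ‖z‖)).sub h_lim
  rw [sub_zero] at h
  exact h.congr fun n => by rw [← h_defect]; ring

end lp

theorem stmt1 (x : ℕ → ell1) (x0 : ell1) (L : ℝ)
    (hcoord : ∀ i : ℕ, Tendsto (fun n => x n i) atTop (𝓝 (x0 i)))
    (hL : Tendsto (fun n => ‖x n - x0‖) atTop (𝓝 L)) :
    ∃ Lm : ℕ → ℝ, (∀ m : ℕ, Tendsto (fun n => ‖x n - x m‖) atTop (𝓝 (Lm m))) ∧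
      Tendsto Lm atTop (𝓝 (2 * L)) := by
  have h_coord_zero : ∀ i, Tendsto (fun n => (x n - x0) i) atTop (𝓝 0) := fun i => by
    simpa using (hcoord i).sub_const (x0 i)
  refine ⟨fun m => ‖x0 - x m‖ + L, fun m => ?_, ?_⟩
  · have h := (lp.tendsto_norm_add_sub_norm_of_tendsto_coe_zero h_coord_zero (x0 - x m)).add hL
    simpa using h
  · simpa [norm_sub_rev x0, two_mul] using hL.add_const L
end
end

section
/- Let $X$ be a predual of $\ell_1$ such that all $w^*$-limit points of the extreme points of $B_{\ell_1}$ lie in $rB_{\ell_1}$ for some $0 \le r < 1$. If $\{x_n^*\} \subset \ell_1$ is $\sigma(\ell_1, X)$-convergent to $x^*$ and converges to $0$ coordinatewise, then $\|x^*\| \le r \liminf_{n\to\infty}\|x_n^*\|$. -/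
open Filter Topology ENNReal NormedSpace

noncomputable section

/-!
Fix `v ∈ X` and `ε > 0`. Only finitely many `i` satisfy `|e_i^*(v)| ≥ r‖v‖ + ε`: otherwise,
by Banach–Alaoglu, infinitely many signed basis vectors would accumulate weak-star at some `y`,
which the hypothesis puts in `r B_{ℓ₁}`, although `y(v) ≥ r‖v‖ + ε`. Splitting
`x_n^*(v) = ∑ x_n^*(i) e_i^*(v)` along this finite set, the finitely many coordinates contribute
little for large `n`, and the rest is at most `(r‖v‖ + ε)‖x_n^*‖`. Choosing `n` with `‖x_n^*‖`
close to the liminf (finite by uniform boundedness) and letting `ε → 0` gives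
`|x^*(v)| ≤ r ‖v‖ liminf ‖x_n^*‖`.
-/

lemma ell1_hasSum_abs (y : ell1) : HasSum (fun i => |y i|) ‖y‖ := by
  simpa using lp.hasSum_norm (p := 1) (by norm_num) y

lemma norm_basisv (i : ℕ) : ‖basisv i‖ = 1 := by
  simp [basisv]

lemma basisv_apply (i j : ℕ) : basisv i j = if j = i then 1 else 0 := by
  simp [basisv, lp.single_apply, Pi.single_apply]

lemma basisv_injective : Function.Injective basisv := by
  intro i j h
  by_contra hij
  simpa [basisv_apply, hij] using congrArg (fun y : ell1 => y i) h

lemma ell1_hasSum_apply_basisv (T : ell1 →L[ℝ] ℝ) (y : ell1) :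
    HasSum (fun i => y i * T (basisv i)) (T y) := by
  convert (lp.hasSum_single (p := 1) (by norm_num) y).mapL T using 2 with i
  rw [basisv, ← smul_eq_mul, ← map_smul, ← lp.single_smul, smul_eq_mul, mul_one]

lemma abs_apply_le_of_abs_apply_basisv_le (T : ell1 →L[ℝ] ℝ) (y : ell1) (F : Finset ℕ)
    {M b : ℝ} (hb : 0 ≤ b) (hM : ∀ i, |T (basisv i)| ≤ M)
    (hF : ∀ i ∉ F, |T (basisv i)| ≤ b) :
    |T y| ≤ (∑ i ∈ F, |y i|) * M + b * ‖y‖ := by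
  have hbound : HasSum (fun i => (F : Set ℕ).indicator (fun i => |y i|) i * M + b * |y i|)
      ((∑ i ∈ F, |y i|) * M + b * ‖y‖) := by
    have hF : HasSum ((F : Set ℕ).indicator fun i => |y i|) (∑ i ∈ F, |y i|) := by
      rw [← Finset.sum_indicator_subset _ (subset_refl F)]
      exact hasSum_sum_of_ne_finset_zero fun i hi => Set.indicator_of_notMem hi _
    exact (hF.mul_right M).add ((ell1_hasSum_abs y).mul_left b)
  refine (ell1_hasSum_apply_basisv T y).norm_le_of_bounded hbound fun i => ?_
  rw [Real.norm_eq_abs, abs_mul]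
  by_cases hi : i ∈ F
  · rw [Set.indicator_of_mem hi]
    nlinarith [abs_nonneg (y i), hM i]
  · rw [Set.indicator_of_notMem hi, zero_mul, zero_add, mul_comm b]
    exact mul_le_mul_of_nonneg_left (hF i hi) (abs_nonneg _)

def signedBasis : Set ell1 := {z | ∃ i, z = basisv i ∨ z = -basisv i}

def AccPtsOfSignedBasisNormLe {X : Type*} [NormedAddCommGroup X] [NormedSpace ℝ X]
    (e : StrongDual ℝ X ≃ₗᵢ[ℝ] ell1) (r : ℝ) : Prop :=
  ∀ y : ell1, y ∈ closure[wstar X e] (signedBasis \ {y}) → ‖y‖ ≤ r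

section WeakStar

variable {X : Type*} [NormedAddCommGroup X] [NormedSpace ℝ X]
  (e : StrongDual ℝ X ≃ₗᵢ[ℝ] ell1)

lemma isCompact_closedBall_wstar : @IsCompact ell1 (wstar X e) (Metric.closedBall 0 1) := by
  let _ : TopologicalSpace ell1 := wstar X e
  have hind : IsInducing (StrongDual.toWeakDual ∘ e.symm) := ⟨rfl⟩
  rw [hind.isCompact_iff, Set.image_comp, LinearIsometryEquiv.image_closedBall, map_zero,
    LinearEquiv.image_eq_preimage_symm]
  exact WeakDual.isCompact_closedBall 0 1

lemma continuous_eval_wstar (v : X) : Continuous[wstar X e, _] fun w : ell1 => e.symm w v :=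
  let _ : TopologicalSpace ell1 := wstar X e
  (WeakDual.eval_continuous v).comp continuous_induced_dom

lemma abs_eval_le (y : ell1) (v : X) : |e.symm y v| ≤ ‖y‖ * ‖v‖ := by
  simpa only [Real.norm_eq_abs, LinearIsometryEquiv.norm_map] using (e.symm y).le_opNorm v

variable {e} {r : ℝ}

lemma exists_mem_closure_norm_le
    (hlim : AccPtsOfSignedBasisNormLe e r) {A : Set ell1} (hA : A ⊆ signedBasis)
    (hAinf : A.Infinite) :
    ∃ y ∈ closure[wstar X e] A, ‖y‖ ≤ r := by
  let _ : TopologicalSpace ell1 := wstar X e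
  have hball : A ⊆ Metric.closedBall 0 1 := by
    rintro _ hz
    obtain ⟨i, rfl | rfl⟩ := hA hz <;> simp [norm_basisv]
  obtain ⟨y, -, hy⟩ :=
    hAinf.exists_accPt_of_subset_isCompact (isCompact_closedBall_wstar e) hball
  rw [accPt_principal_iff_clusterPt, ← mem_closure_iff_clusterPt] at hy
  exact ⟨y, closure_mono Set.sdiff_subset hy,
    hlim y (closure_mono (Set.sdiff_subset_sdiff_left hA) hy)⟩

lemma finite_setOf_le_abs_eval_basisv (hlim : AccPtsOfSignedBasisNormLe e r) (v : X) {ε : ℝ}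
    (hε : 0 < ε) :
    {i | r * ‖v‖ + ε ≤ |e.symm (basisv i) v|}.Finite := by
  set A := {z ∈ signedBasis | r * ‖v‖ + ε ≤ e.symm z v}
  have hA : A.Finite := by
    by_contra hAinf
    obtain ⟨y, hyA, hyr⟩ := exists_mem_closure_norm_le hlim (Set.sep_subset _ _) hAinf
    let _ : TopologicalSpace ell1 := wstar X e
    have hge : r * ‖v‖ + ε ≤ e.symm y v :=
      closure_minimal (fun z hz => hz.2) (isClosed_le continuous_const (continuous_eval_wstar e v))
        hyA
    have hle : e.symm y v ≤ r * ‖v‖ :=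
      (le_abs_self _).trans ((abs_eval_le e y v).trans (by gcongr))
    linarith
  refine ((hA.preimage basisv_injective.injOn).union
    (hA.preimage (neg_injective.comp basisv_injective).injOn)).subset fun i hi => ?_
  rcases le_total 0 (e.symm (basisv i) v) with h | h
  · exact Or.inl ⟨⟨i, Or.inl rfl⟩, by rwa [Set.mem_ofPred_eq, abs_of_nonneg h] at hi⟩
  · exact Or.inr ⟨⟨i, Or.inr rfl⟩, by simpa [abs_of_nonpos h] using hi⟩

end WeakStar

section Estimate

variable {X : Type*} [NormedAddCommGroup X] [NormedSpace ℝ X]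
  {e : StrongDual ℝ X ≃ₗᵢ[ℝ] ell1} {x : ℕ → ell1} {xstar : ell1}

lemma isBoundedUnder_norm_of_tendsto_eval [CompleteSpace X]
    (hws : ∀ v : X, Tendsto (fun n => e.symm (x n) v) atTop (𝓝 (e.symm xstar v))) :
    IsBoundedUnder (· ≤ ·) atTop fun n => ‖x n‖ := by
  obtain ⟨C, hC⟩ := banach_steinhaus (g := fun n => e.symm (x n)) fun v =>
    let ⟨C, hC⟩ := (hws v).norm.bddAbove_range
    ⟨C, fun n => hC ⟨n, rfl⟩⟩
  exact isBoundedUnder_of ⟨C, fun n => by simpa using hC n⟩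

variable {r : ℝ} {v : X}

lemma abs_eval_le_of_pos
    (hlim : AccPtsOfSignedBasisNormLe e r) (hr0 : 0 ≤ r)
    (hbdd : IsBoundedUnder (· ≤ ·) atTop fun n => ‖x n‖)
    (hwsv : Tendsto (fun n => e.symm (x n) v) atTop (𝓝 (e.symm xstar v)))
    (hcoord : ∀ i : ℕ, Tendsto (fun n => x n i) atTop (𝓝 0))
    {ε : ℝ} (hε : 0 < ε) :
    |e.symm xstar v| ≤
      ε * ‖v‖ + (r * ‖v‖ + ε) * (liminf (fun n => ‖x n‖) atTop + ε) + ε := by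
  set F := (finite_setOf_le_abs_eval_basisv hlim v hε).toFinset
  have hsmall : ∀ᶠ n in atTop, ∑ i ∈ F, |x n i| < ε := by
    have : Tendsto (fun n => ∑ i ∈ F, |x n i|) atTop (𝓝 0) := by
      simpa using tendsto_finsetSum F fun i _ => (hcoord i).abs
    exact this.eventually_lt_const hε
  have hclose : ∀ᶠ n in atTop, dist (e.symm (x n) v) (e.symm xstar v) < ε :=
    hwsv.eventually (Metric.ball_mem_nhds _ hε)
  have hnear : ∃ᶠ n in atTop, ‖x n‖ < liminf (fun n => ‖x n‖) atTop + ε :=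
    frequently_lt_of_liminf_lt hbdd.isCoboundedUnder_ge (lt_add_of_pos_right _ hε)
  obtain ⟨n, hn_norm, hn_small, hn_close⟩ := (hnear.and_eventually (hsmall.and hclose)).exists
  let T : ell1 →L[ℝ] ℝ :=
    (ContinuousLinearMap.apply ℝ ℝ v).comp e.symm.toLinearIsometry.toContinuousLinearMap
  have hb : 0 ≤ r * ‖v‖ + ε := by positivity
  have hxn : |T (x n)| ≤ (∑ i ∈ F, |x n i|) * ‖v‖ + (r * ‖v‖ + ε) * ‖x n‖ :=
    abs_apply_le_of_abs_apply_basisv_le T (x n) F hb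
      (fun i => (abs_eval_le e (basisv i) v).trans_eq (by rw [norm_basisv, one_mul]))
      (fun i hi => (show |e.symm (basisv i) v| < _ by simpa [F] using hi).le)
  calc |e.symm xstar v| ≤ |T (x n)| + ε := by
        have := abs_sub_abs_le_abs_sub (e.symm xstar v) (e.symm (x n) v)
        rw [Real.dist_eq, abs_sub_comm] at hn_close
        change _ ≤ |e.symm (x n) v| + ε
        linarith
    _ ≤ ε * ‖v‖ + (r * ‖v‖ + ε) * (liminf (fun n => ‖x n‖) atTop + ε) + ε := by
        gcongr
        refine hxn.trans (add_le_add ?_ ?_) <;> gcongr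

lemma abs_eval_le_mul_liminf
    (hlim : AccPtsOfSignedBasisNormLe e r) (hr0 : 0 ≤ r)
    (hbdd : IsBoundedUnder (· ≤ ·) atTop fun n => ‖x n‖)
    (hwsv : Tendsto (fun n => e.symm (x n) v) atTop (𝓝 (e.symm xstar v)))
    (hcoord : ∀ i : ℕ, Tendsto (fun n => x n i) atTop (𝓝 0)) :
    |e.symm xstar v| ≤ r * liminf (fun n => ‖x n‖) atTop * ‖v‖ := by
  set L := liminf (fun n => ‖x n‖) atTop
  let g : ℝ → ℝ := fun ε => ε * ‖v‖ + (r * ‖v‖ + ε) * (L + ε) + ε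
  have hg : Tendsto g (𝓝[>] 0) (𝓝 (r * L * ‖v‖)) := by
    have : g 0 = r * L * ‖v‖ := by simp only [g]; ring
    rw [← this]
    exact ((by fun_prop : Continuous g).tendsto 0).mono_left nhdsWithin_le_nhds
  exact ge_of_tendsto hg (eventually_nhdsWithin_of_forall fun ε hε =>
    abs_eval_le_of_pos hlim hr0 hbdd hwsv hcoord hε)

end Estimate

theorem stmt3_general (X : Type*) [NormedAddCommGroup X] [NormedSpace ℝ X] [CompleteSpace X]
    (e : StrongDual ℝ X ≃ₗᵢ[ℝ] ell1) (r : ℝ) (hr0 : 0 ≤ r)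
    (hlim : ∀ y : ell1,
      y ∈ @closure _ (wstar X e) ({z : ell1 | ∃ i, z = basisv i ∨ z = -basisv i} \ {y}) →
      ‖y‖ ≤ r)
    (x : ℕ → ell1) (xstar : ell1)
    (hws : ∀ v : X, Tendsto (fun n => (e.symm (x n)) v) atTop (𝓝 ((e.symm xstar) v)))
    (hcoord : ∀ i : ℕ, Tendsto (fun n => x n i) atTop (𝓝 (0:ℝ))) :
    ‖xstar‖ ≤ r * Filter.liminf (fun n => ‖x n‖) atTop := by
  have hbdd := isBoundedUnder_norm_of_tendsto_eval hws
  have hL : 0 ≤ liminf (fun n => ‖x n‖) atTop :=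
    le_liminf_of_le hbdd.isCoboundedUnder_ge (Eventually.of_forall fun n => norm_nonneg _)
  rw [← e.symm.norm_map]
  exact ContinuousLinearMap.opNorm_le_bound _ (mul_nonneg hr0 hL) fun v =>
    abs_eval_le_mul_liminf hlim hr0 hbdd (hws v) hcoord

theorem stmt3 (X : Type*) [NormedAddCommGroup X] [NormedSpace ℝ X] [CompleteSpace X]
    (e : StrongDual ℝ X ≃ₗᵢ[ℝ] ell1) (r : ℝ) (hr0 : 0 ≤ r) (hr1 : r < 1)
    (hlim : ∀ y : ell1,
      y ∈ @closure _ (wstar X e) ({z : ell1 | ∃ i, z = basisv i ∨ z = -basisv i} \ {y}) →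
      ‖y‖ ≤ r)
    (x : ℕ → ell1) (xstar : ell1)
    (hws : ∀ v : X, Tendsto (fun n => (e.symm (x n)) v) atTop (𝓝 ((e.symm xstar) v)))
    (hcoord : ∀ i : ℕ, Tendsto (fun n => x n i) atTop (𝓝 (0:ℝ))) :
    ‖xstar‖ ≤ r * Filter.liminf (fun n => ‖x n‖) atTop :=
  stmt3_general X e r hr0 hlim x xstar hws hcoord
end
end

section
/- Let $\alpha = (\frac{1}{2}, -\frac{1}{4}, \frac{1}{8}, -\frac{1}{16}, \ldots)$, i.e. $\alpha(i) = (-1)^{i+1}2^{-i}$, and let $W_\alpha = \{x \in c : \lim_i x(i) = \sum_i \alpha(i)x(i)\}$. Then for the set $C = \{e_1^*, e_3^*, e_5^*, \ldots\}$ of odd-indexed standard basis vectors of $\ell_1 = W_\alpha^*$, the $\sigma(\ell_1, W_\alpha)$-closed convex hull of $C$ is contained in the unit sphere $S_{\ell_1}$. -/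
open Filter Topology ENNReal NormedSpace

noncomputable section

/-!
Each `w ∈ W_a` with `w ≤ B` at the indices of the basis vectors spanning `C` defines a
weak-star closed half-space `{y | ⟨y, w⟩ ≤ B}` containing `C`, hence its closed convex hull;
likewise for `w ≥ b`.

A pattern `v` on `[0, N)`, continued by the constant `c` solving
`c = ∑_{i<N} a i * v i + c * ∑_{i≥N} a i`, lies in `W_a`; when `|v| ≤ 1` and `‖a‖₁ = 1` this
forces `|c| ≤ 1`. Taking `v = sign y` gives `∑_{i<N} |y i| - ∑_{i≥N} |y i| ≤ ⟨y, w⟩ ≤ 1`, hence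
`‖y‖ ≤ 1`. Taking `v = sign a`, which is `1` on the indices of `C` because `a ≥ 0` there, gives
`1 - 2 ∑_{i≥N} |a i| ≤ c ≤ ⟨y, w⟩ ≤ ‖y‖`, hence `‖y‖ ≥ 1`.
-/

open Filter Topology Finset

lemma abs_tsum_le_tsum_abs {z : ℕ → ℝ} (hz : Summable fun i => |z i|) :
    |∑' i, z i| ≤ ∑' i, |z i| := by
  simpa only [Real.norm_eq_abs] using norm_tsum_le_tsum_norm (f := z) hz

namespace Ell1

lemma summable_abs (y : ell1) : Summable fun i => |y i| := by
  simpa using (lp.memℓp y).summable (p := 1) (by norm_num)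

lemma norm_eq_tsum_abs (y : ell1) : ‖y‖ = ∑' i, |y i| := by
  simpa using lp.norm_eq_tsum_rpow (p := 1) (by norm_num) y

variable {w : ℕ → ℝ} {M : ℝ}

lemma abs_mul_le_of_abs_le (y : ell1) (hw : ∀ i, |w i| ≤ M) (i : ℕ) :
    |y i * w i| ≤ |y i| * M := by
  rw [abs_mul]
  exact mul_le_mul_of_nonneg_left (hw i) (abs_nonneg _)

lemma summable_mul_of_abs_le (y : ell1) (hw : ∀ i, |w i| ≤ M) :
    Summable fun i => y i * w i :=
  Summable.of_norm_bounded ((summable_abs y).mul_right M) (abs_mul_le_of_abs_le y hw)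

lemma abs_tsum_mul_le (y : ell1) (hw : ∀ i, |w i| ≤ M) :
    |∑' i, y i * w i| ≤ ‖y‖ * M := by
  have hsum := (summable_mul_of_abs_le y hw).abs
  calc |∑' i, y i * w i| ≤ ∑' i, |y i * w i| := abs_tsum_le_tsum_abs hsum
    _ ≤ ∑' i, |y i| * M :=
      hsum.tsum_le_tsum (abs_mul_le_of_abs_le y hw) ((summable_abs y).mul_right M)
    _ = ‖y‖ * M := by rw [tsum_mul_right, norm_eq_tsum_abs]

lemma isLinearMap_tsum_mul (hw : ∀ i, |w i| ≤ M) :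
    IsLinearMap ℝ fun y : ell1 => ∑' i, y i * w i where
  map_add y z := by
    simp only [lp.coeFn_add, Pi.add_apply, add_mul]
    exact (summable_mul_of_abs_le y hw).tsum_add (summable_mul_of_abs_le z hw)
  map_smul r y := by
    simp only [lp.coeFn_smul, Pi.smul_apply, smul_eq_mul, mul_assoc]
    exact tsum_mul_left

lemma tsum_basisv_mul (j : ℕ) (w : ℕ → ℝ) : ∑' i, basisv j i * w i = w j := by
  rw [tsum_eq_single j fun i hi => by simp [basisv, hi]]
  simp [basisv]

end Ell1

def MemW (a x : ℕ → ℝ) : Prop :=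
  (∃ L : ℝ, Tendsto x atTop (𝓝 L)) ∧ Tendsto x atTop (𝓝 (∑' i, a i * x i))

def weakStarW (a : ℕ → ℝ) : TopologicalSpace ell1 :=
  TopologicalSpace.induced
    (fun y : ell1 => fun w : {x : ℕ → ℝ // MemW a x} => ∑' i, y i * w.1 i) inferInstance

namespace MemW

variable {a x : ℕ → ℝ}

lemma neg (h : MemW a x) : MemW a (-x) := by
  obtain ⟨⟨L, hL⟩, hlim⟩ := h
  refine ⟨⟨-L, hL.neg⟩, ?_⟩
  simp only [Pi.neg_apply, mul_neg, tsum_neg]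
  exact hlim.neg

lemma exists_abs_le (h : MemW a x) : ∃ M, ∀ i, |x i| ≤ M := by
  obtain ⟨L, hL⟩ := h.1
  obtain ⟨M, hM⟩ := isBounded_iff_forall_norm_le.1 (Metric.isBounded_range_of_tendsto x hL)
  exact ⟨M, fun i => hM _ ⟨i, rfl⟩⟩

end MemW

section ClosedConvexHull

variable {a w : ℕ → ℝ} {ι : Type*} {f : ι → ℕ} {y : ell1}

lemma continuous_tsum_mul_weakStarW (hw : MemW a w) :
    Continuous[weakStarW a, _] fun z : ell1 => ∑' i, z i * w i :=
  @Continuous.comp _ _ _ (weakStarW a) _ _ _ _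
    (continuous_apply (⟨w, hw⟩ : {x // MemW a x})) continuous_induced_dom

lemma tsum_mul_le_of_mem_closure (hw : MemW a w) {B : ℝ} (hB : ∀ k, w (f k) ≤ B)
    (hy : y ∈ closure[weakStarW a] (convexHull ℝ (Set.range fun k => basisv (f k)))) :
    ∑' i, y i * w i ≤ B := by
  obtain ⟨M, hM⟩ := hw.exists_abs_le
  let _ : TopologicalSpace ell1 := weakStarW a
  have hclosed : IsClosed {z : ell1 | ∑' i, z i * w i ≤ B} :=
    isClosed_le (continuous_tsum_mul_weakStarW hw) continuous_const
  refine closure_minimal (convexHull_min ?_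
    (convex_halfSpace_le (Ell1.isLinearMap_tsum_mul hM) B)) hclosed hy
  rintro _ ⟨k, rfl⟩
  exact (Ell1.tsum_basisv_mul _ _).trans_le (hB k)

lemma le_tsum_mul_of_mem_closure (hw : MemW a w) {b : ℝ} (hb : ∀ k, b ≤ w (f k))
    (hy : y ∈ closure[weakStarW a] (convexHull ℝ (Set.range fun k => basisv (f k)))) :
    b ≤ ∑' i, y i * w i := by
  have := tsum_mul_le_of_mem_closure hw.neg (B := -b) (fun k => neg_le_neg (hb k)) hy
  simp only [Pi.neg_apply, mul_neg, tsum_neg] at this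
  linarith

end ClosedConvexHull

section ExtendByConst

variable (a : ℕ → ℝ) (N : ℕ) (v : ℕ → ℝ)

def extendConst : ℝ := (∑ i ∈ range N, a i * v i) / (1 - ∑' i, a (i + N))

def extendByConst (i : ℕ) : ℝ := if i < N then v i else extendConst a N v

variable {a N v}

lemma tsum_mul_extendByConst {z : ℕ → ℝ} (hz : Summable z) :
    ∑' i, z i * extendByConst a N v i
      = ∑ i ∈ range N, z i * v i + extendConst a N v * ∑' i, z (i + N) := by
  have htail (i : ℕ) : z (i + N) * extendByConst a N v (i + N) = extendConst a N v * z (i + N) := by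
    simp [extendByConst, mul_comm]
  have hs : Summable fun i => z i * extendByConst a N v i :=
    (summable_nat_add_iff N).1 <| by
      simpa only [htail] using ((summable_nat_add_iff N).2 hz).mul_left _
  rw [← hs.sum_add_tsum_nat_add N, tsum_congr htail, tsum_mul_left]
  congr 1
  exact sum_congr rfl fun i hi => by simp [extendByConst, mem_range.1 hi]

lemma extendConst_eq (hden : ∑' i, a (i + N) ≠ 1) :
    extendConst a N v = ∑ i ∈ range N, a i * v i + (∑' i, a (i + N)) * extendConst a N v := by
  have : 1 - ∑' i, a (i + N) ≠ 0 := sub_ne_zero.2 hden.symm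
  rw [extendConst]
  field_simp
  ring

lemma memW_extendByConst (ha : Summable a) (hden : ∑' i, a (i + N) ≠ 1) :
    MemW a (extendByConst a N v) := by
  have hlim : Tendsto (extendByConst a N v) atTop (𝓝 (extendConst a N v)) :=
    tendsto_const_nhds.congr' <| (eventually_ge_atTop N).mono fun i hi => by
      simp [extendByConst, not_lt.2 hi]
  refine ⟨⟨_, hlim⟩, ?_⟩
  rwa [tsum_mul_extendByConst ha, mul_comm, ← extendConst_eq hden]

end ExtendByConst

-- Unlike `Real.sign`, this is `1` at `0`.
def pmSign (x : ℝ) : ℝ := if 0 ≤ x then 1 else -1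

lemma mul_pmSign (x : ℝ) : x * pmSign x = |x| := by
  unfold pmSign
  split_ifs with hx
  · rw [mul_one, abs_of_nonneg hx]
  · rw [mul_neg_one, abs_of_neg (not_le.1 hx)]

lemma abs_pmSign_le (x : ℝ) : |pmSign x| ≤ 1 := by
  unfold pmSign
  split_ifs <;> norm_num

section UnitL1Norm

variable {a : ℕ → ℝ} (ha : HasSum (fun i => |a i|) 1) {N : ℕ} {v : ℕ → ℝ}
include ha

lemma abs_tsum_add_le_of_hasSum_abs :
    |∑' i, a (i + N)| ≤ ∑' i, |a (i + N)| :=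
  abs_tsum_le_tsum_abs ((summable_nat_add_iff N).2 ha.summable)

lemma sum_range_abs_of_hasSum_abs : ∑ i ∈ range N, |a i| = 1 - ∑' i, |a (i + N)| := by
  rw [← ha.tsum_eq, ← ha.summable.sum_add_tsum_nat_add N, add_sub_cancel_right]

lemma tsum_add_ne_one_of_hasSum_abs (hN : ∑' i, |a (i + N)| < 1) : ∑' i, a (i + N) ≠ 1 :=
  fun h => by linarith [abs_tsum_add_le_of_hasSum_abs ha (N := N), le_abs_self (∑' i, a (i + N))]

lemma abs_extendConst_le_one (hN : ∑' i, |a (i + N)| < 1) (hv : ∀ i, |v i| ≤ 1) :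
    |extendConst a N v| ≤ 1 := by
  set c := extendConst a N v
  set T := ∑' i, |a (i + N)|
  have hc := extendConst_eq (v := v) (tsum_add_ne_one_of_hasSum_abs ha hN)
  have ht : |∑ i ∈ range N, a i * v i| ≤ 1 - T := by
    rw [← sum_range_abs_of_hasSum_abs ha]
    refine (abs_sum_le_sum_abs _ _).trans (sum_le_sum fun i _ => ?_)
    rw [abs_mul]
    exact mul_le_of_le_one_right (abs_nonneg _) (hv i)
  have hs : |(∑' i, a (i + N)) * c| ≤ T * |c| := by
    rw [abs_mul]
    exact mul_le_mul_of_nonneg_right (abs_tsum_add_le_of_hasSum_abs ha) (abs_nonneg _)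
  have : |c| ≤ 1 - T + T * |c| := calc
    |c| = |∑ i ∈ range N, a i * v i + (∑' i, a (i + N)) * c| := congrArg abs hc
    _ ≤ 1 - T + T * |c| := (abs_add_le _ _).trans (add_le_add ht hs)
  nlinarith

lemma abs_extendByConst_le_one (hN : ∑' i, |a (i + N)| < 1) (hv : ∀ i, |v i| ≤ 1) (i : ℕ) :
    |extendByConst a N v i| ≤ 1 := by
  unfold extendByConst
  split_ifs
  exacts [hv i, abs_extendConst_le_one ha hN hv]

lemma one_sub_two_mul_le_extendConst_pmSign (hN : ∑' i, |a (i + N)| < 1) :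
    1 - 2 * ∑' i, |a (i + N)| ≤ extendConst a N fun i => pmSign (a i) := by
  set c := extendConst a N fun i => pmSign (a i)
  set T := ∑' i, |a (i + N)|
  have hc := extendConst_eq (v := fun i => pmSign (a i)) (tsum_add_ne_one_of_hasSum_abs ha hN)
  have hsc : |(∑' i, a (i + N)) * c| ≤ T := by
    rw [abs_mul]
    exact (mul_le_of_le_one_right (abs_nonneg _)
      (abs_extendConst_le_one ha hN fun i => abs_pmSign_le _)).trans
      (abs_tsum_add_le_of_hasSum_abs ha)
  simp only [mul_pmSign, sum_range_abs_of_hasSum_abs ha] at hc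
  linarith [neg_abs_le ((∑' i, a (i + N)) * c)]

end UnitL1Norm

section MainBounds

lemma eventually_tsum_abs_add_lt_one (a : ℕ → ℝ) : ∀ᶠ N in atTop, ∑' i, |a (i + N)| < 1 :=
  (tendsto_order.1 (tendsto_sum_nat_add fun i => |a i|)).2 1 one_pos

variable {a : ℕ → ℝ} (ha : HasSum (fun i => |a i|) 1) {ι : Type*} {f : ι → ℕ} {y : ell1}
include ha

lemma norm_le_one_of_mem_closure
    (hy : y ∈ closure[weakStarW a] (convexHull ℝ (Set.range fun k => basisv (f k)))) :
    ‖y‖ ≤ 1 := by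
  have hbound : ∀ᶠ N in atTop, ∑ i ∈ range N, |y i| - ∑' i, |y (i + N)| ≤ 1 := by
    filter_upwards [eventually_tsum_abs_add_lt_one a] with N hN
    set v := fun i => pmSign (y i)
    have hv (i : ℕ) : |v i| ≤ 1 := abs_pmSign_le _
    have hw := abs_extendByConst_le_one ha hN hv
    have hcS : |extendConst a N v * ∑' i, y (i + N)| ≤ ∑' i, |y (i + N)| := by
      rw [abs_mul]
      exact (mul_le_of_le_one_left (abs_nonneg _) (abs_extendConst_le_one ha hN hv)).trans
        (abs_tsum_le_tsum_abs ((summable_nat_add_iff N).2 (Ell1.summable_abs y)))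
    calc ∑ i ∈ range N, |y i| - ∑' i, |y (i + N)|
        ≤ ∑ i ∈ range N, y i * v i + extendConst a N v * ∑' i, y (i + N) := by
          simp only [v, mul_pmSign]
          linarith [neg_abs_le (extendConst a N v * ∑' i, y (i + N))]
      _ = ∑' i, y i * extendByConst a N v i :=
          (tsum_mul_extendByConst (Ell1.summable_abs y).of_abs).symm
      _ ≤ 1 := tsum_mul_le_of_mem_closure
          (memW_extendByConst ha.summable.of_abs (tsum_add_ne_one_of_hasSum_abs ha hN))
          (fun k => (le_abs_self _).trans (hw _)) hy
  have hlim : Tendsto (fun N => ∑ i ∈ range N, |y i| - ∑' i, |y (i + N)|) atTop (𝓝 ‖y‖) := by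
    simpa [Ell1.norm_eq_tsum_abs] using
      (Ell1.summable_abs y).hasSum.tendsto_sum_nat.sub (tendsto_sum_nat_add fun i => |y i|)
  exact le_of_tendsto hlim hbound

lemma one_le_norm_of_mem_closure (hf : ∀ k, 0 ≤ a (f k))
    (hy : y ∈ closure[weakStarW a] (convexHull ℝ (Set.range fun k => basisv (f k)))) :
    1 ≤ ‖y‖ := by
  have hbound : ∀ᶠ N in atTop, 1 - 2 * ∑' i, |a (i + N)| ≤ ‖y‖ := by
    filter_upwards [eventually_tsum_abs_add_lt_one a] with N hN
    set v := fun i => pmSign (a i)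
    have hv (i : ℕ) : |v i| ≤ 1 := abs_pmSign_le _
    have hc := abs_extendConst_le_one ha hN hv
    have hw_ge (k : ι) : extendConst a N v ≤ extendByConst a N v (f k) := by
      unfold extendByConst
      split_ifs
      · simpa [v, pmSign, hf k] using (le_abs_self _).trans hc
      · rfl
    calc 1 - 2 * ∑' i, |a (i + N)| ≤ extendConst a N v :=
          one_sub_two_mul_le_extendConst_pmSign ha hN
      _ ≤ ∑' i, y i * extendByConst a N v i := le_tsum_mul_of_mem_closure
          (memW_extendByConst ha.summable.of_abs (tsum_add_ne_one_of_hasSum_abs ha hN)) hw_ge hy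
      _ ≤ ‖y‖ * 1 :=
          (le_abs_self _).trans (Ell1.abs_tsum_mul_le y (abs_extendByConst_le_one ha hN hv))
      _ = ‖y‖ := mul_one _
  have hlim : Tendsto (fun N => 1 - 2 * ∑' i, |a (i + N)|) atTop (𝓝 1) := by
    simpa using tendsto_const_nhds.sub ((tendsto_sum_nat_add fun i => |a i|).const_mul 2)
  exact le_of_tendsto hlim hbound

end MainBounds

def alpha (i : ℕ) : ℝ := (-1) ^ i * (1 / 2) ^ (i + 1)

lemma hasSum_abs_alpha : HasSum (fun i => |alpha i|) 1 := by
  convert hasSum_geometric_two' 1 using 2 with i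
  simp [alpha, abs_mul, pow_succ]
  ring

lemma alpha_two_mul_nonneg (k : ℕ) : 0 ≤ alpha (2 * k) := by
  simp only [alpha, pow_mul, neg_one_sq, one_pow, one_mul]
  positivity

theorem stmt18 :
    let αf : ℕ → ℝ := fun i => (-1) ^ i * (1 / 2) ^ (i + 1)
    let Wmem : (ℕ → ℝ) → Prop := fun x =>
      (∃ L : ℝ, Tendsto x atTop (𝓝 L)) ∧ Tendsto x atTop (𝓝 (∑' i, αf i * x i))
    let ws : TopologicalSpace ell1 := TopologicalSpace.induced
      (fun y : ell1 => fun w : {x : ℕ → ℝ // Wmem x} => ∑' i, y i * w.1 i) inferInstance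
    let C : Set ell1 := Set.range fun k => basisv (2 * k)
    ∀ y ∈ @closure _ ws (convexHull ℝ C), ‖y‖ = 1 := by
  intro αf Wmem ws C y hy
  exact le_antisymm (norm_le_one_of_mem_closure hasSum_abs_alpha (a := alpha) hy)
    (one_le_norm_of_mem_closure hasSum_abs_alpha alpha_two_mul_nonneg hy)
end
end
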